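/- Let n ≥ 3, m ≥ 1, M = circ(−2,1,0,…,0,1). Suppose X(t) = X^0 + h(t)·(1,…,1)^T solves dX/dt = (−1)^{m+1}M^m X in ℂ^n for all t, where h : ℝ → ℂ is differentiable with h(0) = 0. Then h ≡ 0 and X^0 is a constant vector; i.e., there are no nontrivial translating self-similar solutions. -/

import Mathlib

/-! With `D = cycDiff`, `(D x)ᵢ = xᵢ₊₁ - xᵢ`, we have `M = -DᴴD`. Hence `M` is Hermitian, and
for `k ≥ 1` the kernel of `M ^ k` is `ker M = ker D`, the constant vectors. As `M ^ m` kills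
the translation, the flow equation says `h' = (-1)^(m+1) (M ^ m X⁰)ⱼ` for every `j`, so
`v = M ^ m X⁰` is constant. Then `M ^ (2m) X⁰ = M ^ m v = 0`, so `X⁰` is constant, `v = 0`,
and `h' ≡ 0` with `h 0 = 0`. -/

open Complex Real

/-- The n×n circulant matrix circ(−2,1,0,…,0,1) over ℂ. -/
def cycMC (n : ℕ) [NeZero n] : Matrix (Fin n) (Fin n) ℂ :=
  Matrix.of fun i j =>
    (if i = j then (-2 : ℂ) else 0) + (if i = j + 1 then 1 else 0) + (if j = i + 1 then 1 else 0)

open Matrix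
open scoped ComplexOrder

theorem Matrix.IsHermitian.mulVec_eq_zero_of_pow_mulVec_eq_zero {n R : Type*} [Fintype n]
    [DecidableEq n] [Field R] [PartialOrder R] [StarRing R] [StarOrderedRing R]
    {A : Matrix n n R} (hA : A.IsHermitian) {v : n → R} :
    ∀ {k : ℕ}, k ≠ 0 → A ^ k *ᵥ v = 0 → A *ᵥ v = 0
  | 1, _, h => by simpa using h
  | k + 2, _, h => hA.mulVec_eq_zero_of_pow_mulVec_eq_zero k.succ_ne_zero <| by
      rw [← conjTranspose_mul_self_mulVec_eq_zero, (hA.pow _).eq, ← pow_add,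
        show k + 1 + (k + 1) = k + (k + 2) by omega, pow_add, ← mulVec_mulVec, h, mulVec_zero]

open Fin.NatCast in
theorem Fin.apply_eq_apply_of_periodic_one {n : ℕ} [NeZero n] {α : Type*} {f : Fin n → α}
    (hf : Function.Periodic f 1) (i j : Fin n) : f i = f j := by
  have hcast : ∀ k : ℕ, f k = f 0 := by
    intro k
    induction k with
    | zero => simp
    | succ k ih => rw [Nat.cast_succ, hf, ih]
  rw [← Fin.cast_val_eq_self i, ← Fin.cast_val_eq_self j, hcast, hcast]

def cycDiff (n : ℕ) [NeZero n] : Matrix (Fin n) (Fin n) ℂ :=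
  of fun i j => (if j = i + 1 then 1 else 0) - (if j = i then 1 else 0)

theorem cycDiff_mulVec_apply (n : ℕ) [NeZero n] (x : Fin n → ℂ) (i : Fin n) :
    (cycDiff n *ᵥ x) i = x (i + 1) - x i := by
  simp [cycDiff, mulVec, dotProduct, sub_mul, ite_mul, Finset.sum_sub_distrib]

theorem conjTranspose_cycDiff_mulVec_apply (n : ℕ) [NeZero n] (x : Fin n → ℂ) (i : Fin n) :
    ((cycDiff n)ᴴ *ᵥ x) i = x (i - 1) - x i := by
  have hpred (j : Fin n) : i = j + 1 ↔ j = i - 1 := by rw [eq_sub_iff_add_eq, eq_comm]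
  simp [cycDiff, mulVec, dotProduct, sub_mul, ite_mul, Finset.sum_sub_distrib, hpred]

theorem cycMC_mulVec_apply (n : ℕ) [NeZero n] (x : Fin n → ℂ) (i : Fin n) :
    (cycMC n *ᵥ x) i = x (i - 1) - 2 * x i + x (i + 1) := by
  have hpred (j : Fin n) : i = j + 1 ↔ j = i - 1 := by rw [eq_sub_iff_add_eq, eq_comm]
  simp only [mulVec, dotProduct, cycMC, of_apply, hpred, add_mul, ite_mul, neg_mul, zero_mul,
    one_mul, Finset.sum_add_distrib, Finset.sum_ite_eq, Finset.sum_ite_eq', Finset.mem_univ,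
    ↓reduceIte]
  ring

theorem cycMC_eq_neg_conjTranspose_mul_cycDiff (n : ℕ) [NeZero n] :
    cycMC n = -((cycDiff n)ᴴ * cycDiff n) := by
  refine ext_iff_mulVec.2 fun x => funext fun i => ?_
  simp only [neg_mulVec, ← mulVec_mulVec, Pi.neg_apply, conjTranspose_cycDiff_mulVec_apply,
    cycDiff_mulVec_apply, cycMC_mulVec_apply, sub_add_cancel]
  ring

theorem cycDiff_mulVec_eq_zero_iff (n : ℕ) [NeZero n] (x : Fin n → ℂ) :
    cycDiff n *ᵥ x = 0 ↔ ∀ i j, x i = x j := by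
  simp only [funext_iff, cycDiff_mulVec_apply, Pi.zero_apply, sub_eq_zero]
  exact ⟨Fin.apply_eq_apply_of_periodic_one, fun hx i => hx _ _⟩

theorem cycMC_isHermitian (n : ℕ) [NeZero n] : (cycMC n).IsHermitian := by
  rw [cycMC_eq_neg_conjTranspose_mul_cycDiff]
  exact (isHermitian_conjTranspose_mul_self _).neg

theorem cycMC_mulVec_eq_zero_iff (n : ℕ) [NeZero n] (x : Fin n → ℂ) :
    cycMC n *ᵥ x = 0 ↔ ∀ i j, x i = x j := by
  rw [cycMC_eq_neg_conjTranspose_mul_cycDiff, neg_mulVec, neg_eq_zero,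
    conjTranspose_mul_self_mulVec_eq_zero, cycDiff_mulVec_eq_zero_iff]

theorem cycMC_pow_mulVec_eq_zero_iff (n : ℕ) [NeZero n] {m : ℕ} (hm : m ≠ 0) (x : Fin n → ℂ) :
    cycMC n ^ m *ᵥ x = 0 ↔ ∀ i j, x i = x j := by
  rw [← cycMC_mulVec_eq_zero_iff]
  refine ⟨(cycMC_isHermitian n).mulVec_eq_zero_of_pow_mulVec_eq_zero hm, fun hx => ?_⟩
  obtain ⟨k, rfl⟩ := Nat.exists_eq_succ_of_ne_zero hm
  rw [pow_succ, ← mulVec_mulVec, hx, mulVec_zero]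

theorem no_translating_selfsimilar_solutions_general (n m : ℕ) [NeZero n] (hm : 1 ≤ m)
    (X0 : Fin n → ℂ) (h : ℝ → ℂ) (hh0 : h 0 = 0)
    (hflow : ∀ (t : ℝ) (j : Fin n),
      HasDerivAt (fun s => X0 j + h s)
        ((((-1 : ℂ) ^ (m + 1)) • (cycMC n ^ m).mulVec (fun i => X0 i + h t)) j) t) :
    (∀ t : ℝ, h t = 0) ∧ ∃ c : ℂ, ∀ j : Fin n, X0 j = c := by
  have hm0 : m ≠ 0 := by omega
  set v := cycMC n ^ m *ᵥ X0
  have hderiv (t : ℝ) (j : Fin n) : HasDerivAt h ((-1 : ℂ) ^ (m + 1) * v j) t := by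
    have hconst : cycMC n ^ m *ᵥ (fun _ => h t) = 0 :=
      (cycMC_pow_mulVec_eq_zero_iff n hm0 _).2 fun _ _ => rfl
    have hflow_tj := hflow t j
    rwa [hasDerivAt_const_add_iff, show (fun i => X0 i + h t) = X0 + fun _ => h t from rfl,
      mulVec_add, hconst, add_zero] at hflow_tj
  have hv (i j : Fin n) : v i = v j :=
    mul_left_cancel₀ (by simp) ((hderiv 0 i).unique (hderiv 0 j))
  have hX0 : ∀ i j, X0 i = X0 j := by
    rw [← cycMC_pow_mulVec_eq_zero_iff n (m := m + m) (by omega), pow_add, ← mulVec_mulVec]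
    exact (cycMC_pow_mulVec_eq_zero_iff n hm0 v).2 hv
  have hv0 : v = 0 := (cycMC_pow_mulVec_eq_zero_iff n hm0 X0).2 hX0
  have hh' (t : ℝ) : HasDerivAt h 0 t := by
    simpa only [hv0, Pi.zero_apply, mul_zero] using hderiv t 0
  refine ⟨fun t => ?_, X0 0, fun j => hX0 j 0⟩
  rw [← hh0]
  exact is_const_of_deriv_eq_zero (fun s => (hh' s).differentiableAt) (fun s => (hh' s).deriv) t 0

theorem no_translating_selfsimilar_solutions (n m : ℕ) [NeZero n] (hn : 3 ≤ n) (hm : 1 ≤ m)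
    (X0 : Fin n → ℂ) (h : ℝ → ℂ) (hh : Differentiable ℝ h) (hh0 : h 0 = 0)
    (hflow : ∀ (t : ℝ) (j : Fin n),
      HasDerivAt (fun s => X0 j + h s)
        ((((-1 : ℂ) ^ (m + 1)) • (cycMC n ^ m).mulVec (fun i => X0 i + h t)) j) t) :
    (∀ t : ℝ, h t = 0) ∧ ∃ c : ℂ, ∀ j : Fin n, X0 j = c :=
  no_translating_selfsimilar_solutions_general n m hm X0 h hh0 hflow
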